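/- arXiv:2603.04544 — 3 statements merged into one kernel-verified Lean document; each statement's English description precedes it below -/
import Mathlib

section
/- The conditional density ratio of the unmeasured confounder across studies equals an odds ratio (Supplement S3): Let φ : 𝒰 → 𝒰_b and U_b := φ(U). Fix u ∈ 𝒰, z ∈ 𝒵, x ∈ 𝒳 with P(U = u, Z = z, X = x, R = 0) > 0 and P(U = u, Z = z, X = x, R = 1) > 0, and set u_b := φ(u). Then P(U = u | U_b = u_b, Z = z, X = x, R = 0) / P(U = u | U_b = u_b, Z = z, X = x, R = 1) = [ P(R = 0 | U = u, Z = z, X = x)/P(R = 1 | U = u, Z = z, X = x) ] / [ P(R = 0 | U_b = u_b, Z = z, X = x)/P(R = 1 | U_b = u_b, Z = z, X = x) ]. -/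
open Finset

noncomputable section

open scoped Classical

variable {Ω : Type*} [Fintype Ω]

/-- Probability of an event `A` under the weight function `p`. -/
def pr (p : Ω → ℝ) (A : Ω → Prop) : ℝ := ∑ ω, if A ω then p ω else 0

/-- Expectation of a real random variable `Y` under the weight function `p`. -/
def ex (p : Ω → ℝ) (Y : Ω → ℝ) : ℝ := ∑ ω, p ω * Y ω

/-- Conditional probability `P(A | B)`. -/
def cpr (p : Ω → ℝ) (A B : Ω → Prop) : ℝ := pr p (fun ω => A ω ∧ B ω) / pr p B

/-- Conditional expectation `E[Y | B]`. -/
def cex (p : Ω → ℝ) (Y : Ω → ℝ) (B : Ω → Prop) : ℝ :=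
  (∑ ω, if B ω then p ω * Y ω else 0) / pr p B

lemma pr_congr (p : Ω → ℝ) {A B : Ω → Prop} (h : ∀ ω, A ω ↔ B ω) :
    pr p A = pr p B := by
  unfold pr
  apply Finset.sum_congr rfl
  intro ω _
  simp [h ω]

lemma pr_mono (p : Ω → ℝ) (hp : ∀ ω, 0 ≤ p ω) {A B : Ω → Prop}
    (h : ∀ ω, A ω → B ω) : pr p A ≤ pr p B := by
  unfold pr
  apply Finset.sum_le_sum
  intro ω _
  by_cases hA : A ω
  · simp [hA, h ω hA]
  · simp only [hA, if_false]
    by_cases hB : B ω <;> simp [hB, hp ω]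

/-- The conditional density ratio of the unmeasured confounder across studies equals
an odds ratio (Supplement S3). -/
theorem density_ratio_equals_odds_ratio
    {𝒳 𝒰 𝒰b 𝒵 : Type*} [Fintype 𝒳] [Fintype 𝒰] [Fintype 𝒰b] [Fintype 𝒵]
    (p : Ω → ℝ) (hp : ∀ ω, 0 ≤ p ω) (hp1 : ∑ ω, p ω = 1)
    (R : Ω → Bool) (X : Ω → 𝒳) (U : Ω → 𝒰) (Z : Ω → 𝒵)
    (φ : 𝒰 → 𝒰b)
    (u : 𝒰) (z : 𝒵) (x : 𝒳)
    (h0 : 0 < pr p (fun ω => U ω = u ∧ Z ω = z ∧ X ω = x ∧ R ω = false))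
    (h1 : 0 < pr p (fun ω => U ω = u ∧ Z ω = z ∧ X ω = x ∧ R ω = true)) :
    cpr p (fun ω => U ω = u) (fun ω => φ (U ω) = φ u ∧ Z ω = z ∧ X ω = x ∧ R ω = false)
        / cpr p (fun ω => U ω = u) (fun ω => φ (U ω) = φ u ∧ Z ω = z ∧ X ω = x ∧ R ω = true)
      = (cpr p (fun ω => R ω = false) (fun ω => U ω = u ∧ Z ω = z ∧ X ω = x)
          / cpr p (fun ω => R ω = true) (fun ω => U ω = u ∧ Z ω = z ∧ X ω = x))
        / (cpr p (fun ω => R ω = false) (fun ω => φ (U ω) = φ u ∧ Z ω = z ∧ X ω = x)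
          / cpr p (fun ω => R ω = true) (fun ω => φ (U ω) = φ u ∧ Z ω = z ∧ X ω = x)) := by
  set a0 := pr p (fun ω => U ω = u ∧ Z ω = z ∧ X ω = x ∧ R ω = false) with ha0
  set a1 := pr p (fun ω => U ω = u ∧ Z ω = z ∧ X ω = x ∧ R ω = true) with ha1
  set b0 := pr p (fun ω => φ (U ω) = φ u ∧ Z ω = z ∧ X ω = x ∧ R ω = false) with hb0
  set b1 := pr p (fun ω => φ (U ω) = φ u ∧ Z ω = z ∧ X ω = x ∧ R ω = true) with hb1
  set A := pr p (fun ω => U ω = u ∧ Z ω = z ∧ X ω = x) with hA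
  set B := pr p (fun ω => φ (U ω) = φ u ∧ Z ω = z ∧ X ω = x) with hB
  have hb0pos : 0 < b0 := lt_of_lt_of_le h0 (pr_mono p hp (by rintro ω ⟨h, hs⟩; exact ⟨by rw [h], hs⟩))
  have hb1pos : 0 < b1 := lt_of_lt_of_le h1 (pr_mono p hp (by rintro ω ⟨h, hs⟩; exact ⟨by rw [h], hs⟩))
  have hApos : 0 < A := lt_of_lt_of_le h0 (pr_mono p hp (by rintro ω ⟨h1, h2, h3, _⟩; exact ⟨h1, h2, h3⟩))
  have hBpos : 0 < B := lt_of_lt_of_le hb0pos (pr_mono p hp (by rintro ω ⟨h1, h2, h3, _⟩; exact ⟨h1, h2, h3⟩))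
  have e1 : pr p (fun ω => U ω = u ∧ (φ (U ω) = φ u ∧ Z ω = z ∧ X ω = x ∧ R ω = false)) = a0 :=
    pr_congr p (by intro ω; constructor
                   · rintro ⟨h, _, hs⟩; exact ⟨h, hs⟩
                   · rintro ⟨h, hs⟩; exact ⟨h, by rw [h], hs⟩)
  have e2 : pr p (fun ω => U ω = u ∧ (φ (U ω) = φ u ∧ Z ω = z ∧ X ω = x ∧ R ω = true)) = a1 :=
    pr_congr p (by intro ω; constructor
                   · rintro ⟨h, _, hs⟩; exact ⟨h, hs⟩
                   · rintro ⟨h, hs⟩; exact ⟨h, by rw [h], hs⟩)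
  have e3 : pr p (fun ω => R ω = false ∧ (U ω = u ∧ Z ω = z ∧ X ω = x)) = a0 :=
    pr_congr p (by intro ω; tauto)
  have e4 : pr p (fun ω => R ω = true ∧ (U ω = u ∧ Z ω = z ∧ X ω = x)) = a1 :=
    pr_congr p (by intro ω; tauto)
  have e5 : pr p (fun ω => R ω = false ∧ (φ (U ω) = φ u ∧ Z ω = z ∧ X ω = x)) = b0 :=
    pr_congr p (by intro ω; tauto)
  have e6 : pr p (fun ω => R ω = true ∧ (φ (U ω) = φ u ∧ Z ω = z ∧ X ω = x)) = b1 :=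
    pr_congr p (by intro ω; tauto)
  unfold cpr
  rw [e1, e2, e3, e4, e5, e6, ← hb0, ← hb1, ← hA, ← hB]
  field_simp
end
end

section
/- Sensitivity bound for the treatment-bridge identification formula under coarsening of the unmeasured confounder (Supplement S3, treatment-bridge bound): Let φ : 𝒰 → 𝒰_b, U_b := φ(U), let Y₀ be a nonnegative real random variable taking finitely many values, let q : 𝒵 × 𝒳 → [0, ∞), and let Γ ≥ 1. Assume: (i) (Y₀, W) ⫫ (Z, R) | (U, X); (ii) support equality: for all (u, w, x), P(U = u, W = w, X = x, R = 0) > 0 if and only if P(U = u, W = w, X = x, R = 1) > 0; (iii) for every (u, w, x) with P(U = u, W = w, X = x, R = 0) > 0, 1/Γ ≤ P(U = u | U_b = φ(u), W = w, X = x, R = 0)/P(U = u | U_b = φ(u), W = w, X = x, R = 1) ≤ Γ; (iv) for every (u, w, x) with P(U = u, W = w, X = x, R = 1) > 0, E[ Y₀ | U = u, W = w, X = x, R = 1 ] > 0 and 1/Γ ≤ E[ Y₀ | U_b = φ(u), W = w, X = x, R = 1 ]/E[ Y₀ | U = u, W = w, X = x, R = 1 ] ≤ Γ; (v) the coarsened-level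 treatment bridge equation: P(R = 0 | U_b = u_b, W = w, X = x) = E[ 1(R = 1)·q(Z, X) | U_b = u_b, W = w, X = x ] for every (u_b, w, x) with P(U_b = u_b, W = w, X = x) > 0; (vi) P(R = 0) > 0. Then (1/Γ²)·(1/P(R = 0))·E[ 1(R = 1)·q(Z, X)·Y₀ ] ≤ E[ Y₀ | R = 0 ] ≤ Γ²·(1/P(R = 0))·E[ 1(R = 1)·q(Z, X)·Y₀ ]. -/
open Finset

noncomputable section

open scoped Classical

variable {Ω : Type*} [Fintype Ω]

def ws (p : Ω → ℝ) (f : Ω → ℝ) (A : Ω → Prop) : ℝ := ∑ ω, if A ω then p ω * f ω else 0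

lemma pr_nonneg (p : Ω → ℝ) (hp : ∀ ω, 0 ≤ p ω) (A : Ω → Prop) : 0 ≤ pr p A :=
  Finset.sum_nonneg fun ω _ => by by_cases h : A ω <;> simp [h, hp ω]

lemma ws_nonneg (p : Ω → ℝ) (hp : ∀ ω, 0 ≤ p ω) (f : Ω → ℝ) (hf : ∀ ω, 0 ≤ f ω)
    (A : Ω → Prop) : 0 ≤ ws p f A :=
  Finset.sum_nonneg fun ω _ => by
    by_cases h : A ω <;> simp [h]; exact mul_nonneg (hp ω) (hf ω)

lemma ws_congr (p : Ω → ℝ) (f : Ω → ℝ) {A B : Ω → Prop} (h : ∀ ω, A ω ↔ B ω) :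
    ws p f A = ws p f B :=
  Finset.sum_congr rfl fun ω _ => if_congr (h ω) rfl rfl

lemma pr_zero_out (p : Ω → ℝ) (hp : ∀ ω, 0 ≤ p ω) {A : Ω → Prop} (h : pr p A = 0) :
    ∀ ω, A ω → p ω = 0 := by
  intro ω hA
  have := (Finset.sum_eq_zero_iff_of_nonneg (fun ω _ => by
    by_cases h' : A ω <;> simp [h', hp ω])).mp h ω (mem_univ ω)
  simpa [hA] using this

lemma ws_zero_of_pr (p : Ω → ℝ) (hp : ∀ ω, 0 ≤ p ω) (f : Ω → ℝ) {A B : Ω → Prop}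
    (h : pr p A = 0) (hBA : ∀ ω, B ω → A ω) : ws p f B = 0 :=
  Finset.sum_eq_zero fun ω _ => by
    by_cases hB : B ω
    · simp [hB, pr_zero_out p hp h ω (hBA ω hB)]
    · simp [hB]

lemma ws_split (p : Ω → ℝ) (f : Ω → ℝ) {ι : Type*} [Fintype ι] (g : Ω → ι) (A : Ω → Prop) :
    ws p f A = ∑ i, ws p f (fun ω => g ω = i ∧ A ω) := by
  unfold ws
  rw [Finset.sum_comm]
  refine Finset.sum_congr rfl fun ω _ => ?_
  rw [eq_comm]
  by_cases hA : A ω <;> simp [hA, Finset.sum_ite_eq]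

lemma ws_group (p : Ω → ℝ) (Y0 : Ω → ℝ) (F : ℝ → ℝ) (A : Ω → Prop) :
    ws p (fun ω => F (Y0 ω)) A
      = ∑ y ∈ univ.image Y0, F y * pr p (fun ω => Y0 ω = y ∧ A ω) := by
  unfold ws pr
  simp only [Finset.mul_sum]
  rw [Finset.sum_comm]
  refine Finset.sum_congr rfl fun ω _ => ?_
  rw [Finset.sum_eq_single (Y0 ω)]
  · by_cases hA : A ω <;> simp [hA, mul_comm]
  · intro y _ hy
    have hc : ¬ (Y0 ω = y ∧ A ω) := fun hc => hy hc.1.symm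
    simp [hc]
  · intro hmem
    exact absurd (Finset.mem_image_of_mem Y0 (mem_univ ω)) hmem

lemma pr_eq_ws_one (p : Ω → ℝ) (A : Ω → Prop) : pr p A = ws p (fun _ => (1:ℝ)) A := by
  unfold pr ws; simp

lemma ws_factor (p : Ω → ℝ) (f g : Ω → ℝ) (c : ℝ) {A : Ω → Prop}
    (h : ∀ ω, A ω → f ω = c * g ω) : ws p f A = c * ws p g A := by
  unfold ws
  rw [Finset.mul_sum]
  refine Finset.sum_congr rfl fun ω _ => ?_
  by_cases hA : A ω
  · simp only [hA, if_true, h ω hA]; ring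
  · simp [hA]

lemma ind_lemma {𝒳 𝒰 𝒵 𝒲 : Type*} [Fintype 𝒳] [Fintype 𝒰] [Fintype 𝒵] [Fintype 𝒲]
    (p : Ω → ℝ)
    (R : Ω → Bool) (X : Ω → 𝒳) (U : Ω → 𝒰) (Z : Ω → 𝒵) (W : Ω → 𝒲)
    (Y0 : Ω → ℝ) (q : 𝒵 → 𝒳 → ℝ)
    (hNC : ∀ (y : ℝ) (w : 𝒲) (z : 𝒵) (r : Bool) (u : 𝒰) (x : 𝒳),
      0 < pr p (fun ω => U ω = u ∧ X ω = x) →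
      cpr p (fun ω => (Y0 ω = y ∧ W ω = w) ∧ (Z ω = z ∧ R ω = r))
          (fun ω => U ω = u ∧ X ω = x)
        = cpr p (fun ω => Y0 ω = y ∧ W ω = w) (fun ω => U ω = u ∧ X ω = x)
          * cpr p (fun ω => Z ω = z ∧ R ω = r) (fun ω => U ω = u ∧ X ω = x))
    (u : 𝒰) (w : 𝒲) (x : 𝒳)
    (hN : 0 < pr p (fun ω => U ω = u ∧ X ω = x)) :
    ws p Y0 (fun ω => U ω = u ∧ W ω = w ∧ X ω = x ∧ R ω = false)
      * pr p (fun ω => U ω = u ∧ W ω = w ∧ X ω = x ∧ R ω = true)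
    = ws p Y0 (fun ω => U ω = u ∧ W ω = w ∧ X ω = x ∧ R ω = true)
      * pr p (fun ω => U ω = u ∧ W ω = w ∧ X ω = x ∧ R ω = false)
    ∧ ws p (fun ω => q (Z ω) (X ω) * Y0 ω) (fun ω => U ω = u ∧ W ω = w ∧ X ω = x ∧ R ω = true)
      * pr p (fun ω => U ω = u ∧ W ω = w ∧ X ω = x ∧ R ω = true)
    = ws p Y0 (fun ω => U ω = u ∧ W ω = w ∧ X ω = x ∧ R ω = true)
      * ws p (fun ω => q (Z ω) (X ω)) (fun ω => U ω = u ∧ W ω = w ∧ X ω = x ∧ R ω = true) := by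
  set N := pr p (fun ω => U ω = u ∧ X ω = x) with hNdef
  have hN0 : N ≠ 0 := ne_of_gt hN
  -- star
  have star : ∀ (y : ℝ) (z : 𝒵) (r : Bool),
      pr p (fun ω => Y0 ω = y ∧ W ω = w ∧ Z ω = z ∧ R ω = r ∧ U ω = u ∧ X ω = x) * N
      = pr p (fun ω => Y0 ω = y ∧ W ω = w ∧ U ω = u ∧ X ω = x)
        * pr p (fun ω => Z ω = z ∧ R ω = r ∧ U ω = u ∧ X ω = x) := by
    intro y z r
    have h := hNC y w z r u x hN
    simp only [cpr] at h
    rw [div_eq_iff hN0] at h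
    rw [pr_congr p (show ∀ ω, (Y0 ω = y ∧ W ω = w ∧ Z ω = z ∧ R ω = r ∧ U ω = u ∧ X ω = x)
        ↔ (((Y0 ω = y ∧ W ω = w) ∧ (Z ω = z ∧ R ω = r)) ∧ (U ω = u ∧ X ω = x))
        from fun ω => by tauto)]
    rw [pr_congr p (show ∀ ω, (Y0 ω = y ∧ W ω = w ∧ U ω = u ∧ X ω = x)
        ↔ ((Y0 ω = y ∧ W ω = w) ∧ (U ω = u ∧ X ω = x)) from fun ω => by tauto)]
    rw [pr_congr p (show ∀ ω, (Z ω = z ∧ R ω = r ∧ U ω = u ∧ X ω = x)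
        ↔ ((Z ω = z ∧ R ω = r) ∧ (U ω = u ∧ X ω = x)) from fun ω => by tauto)]
    rw [h]
    have hN0' : pr p (fun ω => U ω = u ∧ X ω = x) ≠ 0 := hN0
    field_simp [hN0']
    change _ = _ * N ^ 2 * _
    ring
  -- M-star
  have mstar : ∀ (F : ℝ → ℝ) (z : 𝒵) (r : Bool),
      ws p (fun ω => F (Y0 ω)) (fun ω => U ω = u ∧ W ω = w ∧ X ω = x ∧ Z ω = z ∧ R ω = r) * N
      = ws p (fun ω => F (Y0 ω)) (fun ω => U ω = u ∧ W ω = w ∧ X ω = x)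
        * pr p (fun ω => Z ω = z ∧ R ω = r ∧ U ω = u ∧ X ω = x) := by
    intro F z r
    rw [ws_group, ws_group, Finset.sum_mul, Finset.sum_mul]
    refine Finset.sum_congr rfl fun y _ => ?_
    have hs := star y z r
    rw [pr_congr p (show ∀ ω, (Y0 ω = y ∧ U ω = u ∧ W ω = w ∧ X ω = x ∧ Z ω = z ∧ R ω = r)
        ↔ (Y0 ω = y ∧ W ω = w ∧ Z ω = z ∧ R ω = r ∧ U ω = u ∧ X ω = x) from fun ω => by tauto)]
    rw [pr_congr p (show ∀ ω, (Y0 ω = y ∧ U ω = u ∧ W ω = w ∧ X ω = x)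
        ↔ (Y0 ω = y ∧ W ω = w ∧ U ω = u ∧ X ω = x) from fun ω => by tauto)]
    linear_combination F y * hs
  -- exchange
  have exch : ∀ (F G : ℝ → ℝ) (z z' : 𝒵) (r r' : Bool),
      ws p (fun ω => F (Y0 ω)) (fun ω => U ω = u ∧ W ω = w ∧ X ω = x ∧ Z ω = z ∧ R ω = r)
      * ws p (fun ω => G (Y0 ω)) (fun ω => U ω = u ∧ W ω = w ∧ X ω = x ∧ Z ω = z' ∧ R ω = r')
      = ws p (fun ω => F (Y0 ω)) (fun ω => U ω = u ∧ W ω = w ∧ X ω = x ∧ Z ω = z' ∧ R ω = r')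
      * ws p (fun ω => G (Y0 ω)) (fun ω => U ω = u ∧ W ω = w ∧ X ω = x ∧ Z ω = z ∧ R ω = r) := by
    intro F G z z' r r'
    have h1 := mstar F z r
    have h2 := mstar G z' r'
    have h3 := mstar F z' r'
    have h4 := mstar G z r
    apply mul_right_cancel₀ (mul_ne_zero hN0 hN0)
    calc ws p (fun ω => F (Y0 ω)) (fun ω => U ω = u ∧ W ω = w ∧ X ω = x ∧ Z ω = z ∧ R ω = r)
          * ws p (fun ω => G (Y0 ω)) (fun ω => U ω = u ∧ W ω = w ∧ X ω = x ∧ Z ω = z' ∧ R ω = r')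
          * (N * N)
        = (ws p (fun ω => F (Y0 ω)) (fun ω => U ω = u ∧ W ω = w ∧ X ω = x ∧ Z ω = z ∧ R ω = r) * N)
          * (ws p (fun ω => G (Y0 ω)) (fun ω => U ω = u ∧ W ω = w ∧ X ω = x ∧ Z ω = z' ∧ R ω = r') * N) := by ring
      _ = (ws p (fun ω => F (Y0 ω)) (fun ω => U ω = u ∧ W ω = w ∧ X ω = x) * pr p (fun ω => Z ω = z ∧ R ω = r ∧ U ω = u ∧ X ω = x))
          * (ws p (fun ω => G (Y0 ω)) (fun ω => U ω = u ∧ W ω = w ∧ X ω = x) * pr p (fun ω => Z ω = z' ∧ R ω = r' ∧ U ω = u ∧ X ω = x)) := by rw [h1, h2]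
      _ = (ws p (fun ω => F (Y0 ω)) (fun ω => U ω = u ∧ W ω = w ∧ X ω = x) * pr p (fun ω => Z ω = z' ∧ R ω = r' ∧ U ω = u ∧ X ω = x))
          * (ws p (fun ω => G (Y0 ω)) (fun ω => U ω = u ∧ W ω = w ∧ X ω = x) * pr p (fun ω => Z ω = z ∧ R ω = r ∧ U ω = u ∧ X ω = x)) := by ring
      _ = (ws p (fun ω => F (Y0 ω)) (fun ω => U ω = u ∧ W ω = w ∧ X ω = x ∧ Z ω = z' ∧ R ω = r') * N)
          * (ws p (fun ω => G (Y0 ω)) (fun ω => U ω = u ∧ W ω = w ∧ X ω = x ∧ Z ω = z ∧ R ω = r) * N) := by rw [h3, h4]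
      _ = _ := by ring
  -- swap: with coefficients
  have swap : ∀ (F G : ℝ → ℝ) (c d : 𝒵 → ℝ) (r r' : Bool),
      (∑ z, c z * ws p (fun ω => F (Y0 ω)) (fun ω => U ω = u ∧ W ω = w ∧ X ω = x ∧ Z ω = z ∧ R ω = r))
      * (∑ z, d z * ws p (fun ω => G (Y0 ω)) (fun ω => U ω = u ∧ W ω = w ∧ X ω = x ∧ Z ω = z ∧ R ω = r'))
      = (∑ z, c z * ws p (fun ω => G (Y0 ω)) (fun ω => U ω = u ∧ W ω = w ∧ X ω = x ∧ Z ω = z ∧ R ω = r))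
      * (∑ z, d z * ws p (fun ω => F (Y0 ω)) (fun ω => U ω = u ∧ W ω = w ∧ X ω = x ∧ Z ω = z ∧ R ω = r')) := by
    intro F G c d r r'
    rw [Finset.sum_mul_sum, Finset.sum_mul_sum]
    refine Finset.sum_congr rfl fun z _ => Finset.sum_congr rfl fun z' _ => ?_
    have := exch F G z z' r r'
    calc c z * ws p (fun ω => F (Y0 ω)) (fun ω => U ω = u ∧ W ω = w ∧ X ω = x ∧ Z ω = z ∧ R ω = r)
          * (d z' * ws p (fun ω => G (Y0 ω)) (fun ω => U ω = u ∧ W ω = w ∧ X ω = x ∧ Z ω = z' ∧ R ω = r'))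
        = c z * d z' * (ws p (fun ω => F (Y0 ω)) (fun ω => U ω = u ∧ W ω = w ∧ X ω = x ∧ Z ω = z ∧ R ω = r)
          * ws p (fun ω => G (Y0 ω)) (fun ω => U ω = u ∧ W ω = w ∧ X ω = x ∧ Z ω = z' ∧ R ω = r')) := by ring
      _ = c z * d z' * (ws p (fun ω => F (Y0 ω)) (fun ω => U ω = u ∧ W ω = w ∧ X ω = x ∧ Z ω = z' ∧ R ω = r')
          * ws p (fun ω => G (Y0 ω)) (fun ω => U ω = u ∧ W ω = w ∧ X ω = x ∧ Z ω = z ∧ R ω = r)) := by rw [this]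
      _ = _ := by ring
  -- decompositions over z
  have decomp : ∀ (f : Ω → ℝ) (r : Bool),
      ws p f (fun ω => U ω = u ∧ W ω = w ∧ X ω = x ∧ R ω = r)
      = ∑ z, ws p f (fun ω => U ω = u ∧ W ω = w ∧ X ω = x ∧ Z ω = z ∧ R ω = r) := by
    intro f r
    rw [ws_split p f Z (fun ω => U ω = u ∧ W ω = w ∧ X ω = x ∧ R ω = r)]
    exact Finset.sum_congr rfl fun z _ => ws_congr p f (fun ω => by tauto)
  have hid : (fun ω => (id : ℝ → ℝ) (Y0 ω)) = Y0 := rfl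
  have hone : ∀ (A : Ω → Prop), ws p (fun ω => (fun _ : ℝ => (1:ℝ)) (Y0 ω)) A = pr p A := by
    intro A; unfold ws pr; exact Finset.sum_congr rfl fun ω _ => by by_cases h : A ω <;> simp [h]
  constructor
  · -- A * b = B * a
    have h := swap (id) (fun _ => 1) (fun _ => 1) (fun _ => 1) false true
    simp only [hid, hone, one_mul] at h
    rw [decomp Y0 false, decomp Y0 true,
      show pr p (fun ω => U ω = u ∧ W ω = w ∧ X ω = x ∧ R ω = true)
        = ∑ z, pr p (fun ω => U ω = u ∧ W ω = w ∧ X ω = x ∧ Z ω = z ∧ R ω = true) from by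
          rw [← hone, decomp]; exact Finset.sum_congr rfl fun z _ => hone _,
      show pr p (fun ω => U ω = u ∧ W ω = w ∧ X ω = x ∧ R ω = false)
        = ∑ z, pr p (fun ω => U ω = u ∧ W ω = w ∧ X ω = x ∧ Z ω = z ∧ R ω = false) from by
          rw [← hone, decomp]; exact Finset.sum_congr rfl fun z _ => hone _]
    linear_combination h
  · -- T * b = B * Q
    have h := swap (id) (fun _ => 1) (fun z => q z x) (fun _ => 1) true true
    simp only [hid, hone, one_mul] at h
    have hT : ws p (fun ω => q (Z ω) (X ω) * Y0 ω) (fun ω => U ω = u ∧ W ω = w ∧ X ω = x ∧ R ω = true)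
        = ∑ z, q z x * ws p Y0 (fun ω => U ω = u ∧ W ω = w ∧ X ω = x ∧ Z ω = z ∧ R ω = true) := by
      rw [decomp]
      refine Finset.sum_congr rfl fun z _ => ?_
      exact ws_factor p _ Y0 (q z x) (fun ω hω => by rw [hω.2.2.2.1, hω.2.2.1])
    have hQ : ws p (fun ω => q (Z ω) (X ω)) (fun ω => U ω = u ∧ W ω = w ∧ X ω = x ∧ R ω = true)
        = ∑ z, q z x * pr p (fun ω => U ω = u ∧ W ω = w ∧ X ω = x ∧ Z ω = z ∧ R ω = true) := by
      rw [decomp]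
      refine Finset.sum_congr rfl fun z _ => ?_
      rw [← hone]
      exact ws_factor p _ _ (q z x) (fun ω hω => by rw [hω.2.2.2.1, hω.2.2.1]; ring)
    rw [hT, hQ, decomp Y0 true,
      show pr p (fun ω => U ω = u ∧ W ω = w ∧ X ω = x ∧ R ω = true)
        = ∑ z, pr p (fun ω => U ω = u ∧ W ω = w ∧ X ω = x ∧ Z ω = z ∧ R ω = true) from by
          rw [← hone, decomp]; exact Finset.sum_congr rfl fun z _ => hone _]
    linear_combination h

lemma cex_eq (p : Ω → ℝ) (Y : Ω → ℝ) (B : Ω → Prop) : cex p Y B = ws p Y B / pr p B := rfl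

lemma fibdec {𝒰 𝒰b : Type*} [Fintype 𝒰] (p : Ω → ℝ) (U : Ω → 𝒰) (φ : 𝒰 → 𝒰b)
    (f : Ω → ℝ) (C : Ω → Prop) (ub : 𝒰b) :
    ws p f (fun ω => φ (U ω) = ub ∧ C ω)
      = ∑ u, if φ u = ub then ws p f (fun ω => U ω = u ∧ C ω) else 0 := by
  rw [ws_split p f U]
  refine Finset.sum_congr rfl fun u _ => ?_
  by_cases h : φ u = ub
  · rw [if_pos h]
    exact ws_congr p f fun ω =>
      ⟨fun hh => ⟨hh.1, hh.2.2⟩, fun hh => ⟨hh.1, by rw [hh.1]; exact h, hh.2⟩⟩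
  · rw [if_neg h]
    refine Finset.sum_eq_zero fun ω _ => ?_
    rw [if_neg]
    rintro ⟨h1, h2, -⟩
    exact h (by rw [← h1]; exact h2)

lemma fibdecP {𝒰 𝒰b : Type*} [Fintype 𝒰] (p : Ω → ℝ) (U : Ω → 𝒰) (φ : 𝒰 → 𝒰b)
    (C : Ω → Prop) (ub : 𝒰b) :
    pr p (fun ω => φ (U ω) = ub ∧ C ω)
      = ∑ u, if φ u = ub then pr p (fun ω => U ω = u ∧ C ω) else 0 := by
  rw [pr_eq_ws_one, fibdec]
  exact Finset.sum_congr rfl fun u _ => by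
    by_cases h : φ u = ub <;> simp [h, ← pr_eq_ws_one]

set_option maxHeartbeats 1000000 in
lemma fiber_lemma {𝒳 𝒰 𝒰b 𝒵 𝒲 : Type*} [Fintype 𝒳] [Fintype 𝒰] [Fintype 𝒰b] [Fintype 𝒵] [Fintype 𝒲]
    (p : Ω → ℝ) (hp : ∀ ω, 0 ≤ p ω)
    (R : Ω → Bool) (X : Ω → 𝒳) (U : Ω → 𝒰) (Z : Ω → 𝒵) (W : Ω → 𝒲)
    (φ : 𝒰 → 𝒰b)
    (Y0 : Ω → ℝ) (hY0 : ∀ ω, 0 ≤ Y0 ω)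
    (q : 𝒵 → 𝒳 → ℝ) (hq0 : ∀ z x, 0 ≤ q z x)
    (Γ : ℝ) (hΓ : 1 ≤ Γ)
    (hNC : ∀ (y : ℝ) (w : 𝒲) (z : 𝒵) (r : Bool) (u : 𝒰) (x : 𝒳),
      0 < pr p (fun ω => U ω = u ∧ X ω = x) →
      cpr p (fun ω => (Y0 ω = y ∧ W ω = w) ∧ (Z ω = z ∧ R ω = r))
          (fun ω => U ω = u ∧ X ω = x)
        = cpr p (fun ω => Y0 ω = y ∧ W ω = w) (fun ω => U ω = u ∧ X ω = x)
          * cpr p (fun ω => Z ω = z ∧ R ω = r) (fun ω => U ω = u ∧ X ω = x))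
    (hsupp : ∀ (u : 𝒰) (w : 𝒲) (x : 𝒳),
      0 < pr p (fun ω => U ω = u ∧ W ω = w ∧ X ω = x ∧ R ω = false)
        ↔ 0 < pr p (fun ω => U ω = u ∧ W ω = w ∧ X ω = x ∧ R ω = true))
    (hmean : ∀ (u : 𝒰) (w : 𝒲) (x : 𝒳),
      0 < pr p (fun ω => U ω = u ∧ W ω = w ∧ X ω = x ∧ R ω = true) →
      0 < cex p Y0 (fun ω => U ω = u ∧ W ω = w ∧ X ω = x ∧ R ω = true)
        ∧ 1 / Γ ≤ cex p Y0 (fun ω => φ (U ω) = φ u ∧ W ω = w ∧ X ω = x ∧ R ω = true)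
            / cex p Y0 (fun ω => U ω = u ∧ W ω = w ∧ X ω = x ∧ R ω = true)
        ∧ cex p Y0 (fun ω => φ (U ω) = φ u ∧ W ω = w ∧ X ω = x ∧ R ω = true)
            / cex p Y0 (fun ω => U ω = u ∧ W ω = w ∧ X ω = x ∧ R ω = true) ≤ Γ)
    (hBridge : ∀ (ub : 𝒰b) (w : 𝒲) (x : 𝒳),
      0 < pr p (fun ω => φ (U ω) = ub ∧ W ω = w ∧ X ω = x) →
      cpr p (fun ω => R ω = false) (fun ω => φ (U ω) = ub ∧ W ω = w ∧ X ω = x)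
        = cex p (fun ω => (if R ω = true then (1 : ℝ) else 0) * q (Z ω) (X ω))
            (fun ω => φ (U ω) = ub ∧ W ω = w ∧ X ω = x))
    (ub : 𝒰b) (w : 𝒲) (x : 𝒳) :
    ((∑ u, if φ u = ub then
        ws p (fun ω => q (Z ω) (X ω) * Y0 ω) (fun ω => U ω = u ∧ W ω = w ∧ X ω = x ∧ R ω = true)
      else 0)
      ≤ Γ ^ 2 * ∑ u, if φ u = ub then
        ws p Y0 (fun ω => U ω = u ∧ W ω = w ∧ X ω = x ∧ R ω = false) else 0)
    ∧ ((∑ u, if φ u = ub then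
        ws p Y0 (fun ω => U ω = u ∧ W ω = w ∧ X ω = x ∧ R ω = false) else 0)
      ≤ Γ ^ 2 * ∑ u, if φ u = ub then
        ws p (fun ω => q (Z ω) (X ω) * Y0 ω) (fun ω => U ω = u ∧ W ω = w ∧ X ω = x ∧ R ω = true)
      else 0) := by
  have hΓ0 : (0:ℝ) < Γ := lt_of_lt_of_le one_pos hΓ
  have hΓ2 : (0:ℝ) < Γ ^ 2 := pow_pos hΓ0 2
  by_cases hub : 0 < pr p (fun ω => φ (U ω) = ub ∧ W ω = w ∧ X ω = x)
  · -- main case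
    set M := cex p Y0 (fun ω => φ (U ω) = ub ∧ W ω = w ∧ X ω = x ∧ R ω = true) with hMdef
    have hM0 : 0 ≤ M := by
      rw [hMdef, cex_eq]
      exact div_nonneg (ws_nonneg p hp Y0 hY0 _) (pr_nonneg p hp _)
    -- bridge: sum of a = sum of Q
    have bridge :
        (∑ u, if φ u = ub then pr p (fun ω => U ω = u ∧ W ω = w ∧ X ω = x ∧ R ω = false) else 0)
        = ∑ u, if φ u = ub then
            ws p (fun ω => q (Z ω) (X ω)) (fun ω => U ω = u ∧ W ω = w ∧ X ω = x ∧ R ω = true)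
          else 0 := by
      have hb := hBridge ub w x hub
      rw [cpr, cex_eq, div_eq_div_iff (ne_of_gt hub) (ne_of_gt hub)] at hb
      have hb' := mul_right_cancel₀ (ne_of_gt hub) hb
      have hL : pr p (fun ω => R ω = false ∧ φ (U ω) = ub ∧ W ω = w ∧ X ω = x)
          = ∑ u, if φ u = ub then
              pr p (fun ω => U ω = u ∧ W ω = w ∧ X ω = x ∧ R ω = false) else 0 := by
        rw [pr_congr p (show ∀ ω, (R ω = false ∧ φ (U ω) = ub ∧ W ω = w ∧ X ω = x)
            ↔ (φ (U ω) = ub ∧ W ω = w ∧ X ω = x ∧ R ω = false) from fun ω => by tauto)]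
        exact fibdecP p U φ _ ub
      have hR : ws p (fun ω => (if R ω = true then (1:ℝ) else 0) * q (Z ω) (X ω))
            (fun ω => φ (U ω) = ub ∧ W ω = w ∧ X ω = x)
          = ∑ u, if φ u = ub then
              ws p (fun ω => q (Z ω) (X ω)) (fun ω => U ω = u ∧ W ω = w ∧ X ω = x ∧ R ω = true)
            else 0 := by
        have step : ws p (fun ω => (if R ω = true then (1:ℝ) else 0) * q (Z ω) (X ω))
              (fun ω => φ (U ω) = ub ∧ W ω = w ∧ X ω = x)
            = ws p (fun ω => q (Z ω) (X ω))
              (fun ω => φ (U ω) = ub ∧ W ω = w ∧ X ω = x ∧ R ω = true) := by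
          unfold ws
          refine Finset.sum_congr rfl fun ω _ => ?_
          by_cases hr : R ω = true
          · by_cases hc : φ (U ω) = ub ∧ W ω = w ∧ X ω = x <;>
              simp [hr, hc]
          · by_cases hc : φ (U ω) = ub ∧ W ω = w ∧ X ω = x <;>
              simp [hr, hc]
        rw [step]
        exact fibdec p U φ _ _ ub
      rw [hL] at hb'
      rw [hR] at hb'
      exact hb'
    -- per-u key facts
    have key : ∀ u : 𝒰, φ u = ub →
        (ws p (fun ω => q (Z ω) (X ω) * Y0 ω) (fun ω => U ω = u ∧ W ω = w ∧ X ω = x ∧ R ω = true)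
          ≤ (Γ * M) * ws p (fun ω => q (Z ω) (X ω)) (fun ω => U ω = u ∧ W ω = w ∧ X ω = x ∧ R ω = true))
        ∧ ((M / Γ) * ws p (fun ω => q (Z ω) (X ω)) (fun ω => U ω = u ∧ W ω = w ∧ X ω = x ∧ R ω = true)
          ≤ ws p (fun ω => q (Z ω) (X ω) * Y0 ω) (fun ω => U ω = u ∧ W ω = w ∧ X ω = x ∧ R ω = true))
        ∧ (ws p Y0 (fun ω => U ω = u ∧ W ω = w ∧ X ω = x ∧ R ω = false)
          ≤ (Γ * M) * pr p (fun ω => U ω = u ∧ W ω = w ∧ X ω = x ∧ R ω = false))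
        ∧ ((M / Γ) * pr p (fun ω => U ω = u ∧ W ω = w ∧ X ω = x ∧ R ω = false)
          ≤ ws p Y0 (fun ω => U ω = u ∧ W ω = w ∧ X ω = x ∧ R ω = false)) := by
      intro u hu
      by_cases hb0 : 0 < pr p (fun ω => U ω = u ∧ W ω = w ∧ X ω = x ∧ R ω = true)
      · -- positive cell
        set b := pr p (fun ω => U ω = u ∧ W ω = w ∧ X ω = x ∧ R ω = true) with hbdef
        set a := pr p (fun ω => U ω = u ∧ W ω = w ∧ X ω = x ∧ R ω = false) with hadef
        set B := ws p Y0 (fun ω => U ω = u ∧ W ω = w ∧ X ω = x ∧ R ω = true) with hBdef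
        set A := ws p Y0 (fun ω => U ω = u ∧ W ω = w ∧ X ω = x ∧ R ω = false) with hAdef
        set Q := ws p (fun ω => q (Z ω) (X ω)) (fun ω => U ω = u ∧ W ω = w ∧ X ω = x ∧ R ω = true) with hQdef
        set T := ws p (fun ω => q (Z ω) (X ω) * Y0 ω) (fun ω => U ω = u ∧ W ω = w ∧ X ω = x ∧ R ω = true) with hTdef
        have hN : 0 < pr p (fun ω => U ω = u ∧ X ω = x) :=
          lt_of_lt_of_le hb0 (pr_mono p hp fun ω h => ⟨h.1, h.2.2.1⟩)
        obtain ⟨ind1, ind2⟩ := ind_lemma p R X U Z W Y0 q hNC u w x hN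
        obtain ⟨hm1, hm2, hm3⟩ := hmean u w x hb0
        rw [hu] at hm2 hm3
        rw [← hMdef] at hm2 hm3
        rw [cex_eq] at hm1 hm2 hm3
        rw [← hbdef, ← hBdef] at hm1 hm2 hm3
        rw [← hadef, ← hbdef, ← hAdef, ← hBdef] at ind1
        rw [← hbdef, ← hBdef, ← hQdef, ← hTdef] at ind2
        set m := B / b with hmdef
        have hm1' : 0 < m := hm1
        have hmM1 : m ≤ Γ * M := by
          rw [div_le_div_iff₀ hΓ0 hm1'] at hm2
          linarith
        have hmM2 : M ≤ Γ * m := by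
          rw [div_le_iff₀ hm1'] at hm3
          linarith
        have hQ0 : 0 ≤ Q := ws_nonneg p hp _ (fun ω => hq0 _ _) _
        have ha0 : 0 ≤ a := pr_nonneg p hp _
        have hb0' : b ≠ 0 := ne_of_gt hb0
        have hAval : A = a * m := by
          rw [hmdef]
          field_simp [hb0']
          linear_combination ind1
        have hTval : T = Q * m := by
          rw [hmdef]
          field_simp [hb0']
          linear_combination ind2
        have hMdivΓ : M / Γ ≤ m := by
          rw [div_le_iff₀ hΓ0]
          calc M ≤ Γ * m := hmM2
            _ = m * Γ := mul_comm Γ m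
        refine ⟨?_, ?_, ?_, ?_⟩
        · rw [hTval]
          calc Q * m ≤ Q * (Γ * M) := mul_le_mul_of_nonneg_left hmM1 hQ0
            _ = Γ * M * Q := by ring
        · rw [hTval]
          calc M / Γ * Q = Q * (M / Γ) := by ring
            _ ≤ Q * m := mul_le_mul_of_nonneg_left hMdivΓ hQ0
        · rw [hAval]
          calc a * m ≤ a * (Γ * M) := mul_le_mul_of_nonneg_left hmM1 ha0
            _ = Γ * M * a := by ring
        · rw [hAval]
          calc M / Γ * a = a * (M / Γ) := by ring
            _ ≤ a * m := mul_le_mul_of_nonneg_left hMdivΓ ha0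
      · -- zero cell
        have hbz : pr p (fun ω => U ω = u ∧ W ω = w ∧ X ω = x ∧ R ω = true) = 0 :=
          le_antisymm (not_lt.mp hb0) (pr_nonneg p hp _)
        have haz : pr p (fun ω => U ω = u ∧ W ω = w ∧ X ω = x ∧ R ω = false) = 0 := by
          by_contra hne
          exact hb0 ((hsupp u w x).mp
            (lt_of_le_of_ne (pr_nonneg p hp _) (Ne.symm hne)))
        have hTz : ws p (fun ω => q (Z ω) (X ω) * Y0 ω)
            (fun ω => U ω = u ∧ W ω = w ∧ X ω = x ∧ R ω = true) = 0 :=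
          ws_zero_of_pr p hp _ hbz fun ω h => h
        have hQz : ws p (fun ω => q (Z ω) (X ω))
            (fun ω => U ω = u ∧ W ω = w ∧ X ω = x ∧ R ω = true) = 0 :=
          ws_zero_of_pr p hp _ hbz fun ω h => h
        have hAz : ws p Y0 (fun ω => U ω = u ∧ W ω = w ∧ X ω = x ∧ R ω = false) = 0 :=
          ws_zero_of_pr p hp _ haz fun ω h => h
        rw [hTz, hQz, hAz, haz]
        simp
    -- assemble sums
    set Sa := ∑ u, if φ u = ub then
        pr p (fun ω => U ω = u ∧ W ω = w ∧ X ω = x ∧ R ω = false) else 0 with hSa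
    set SA := ∑ u, if φ u = ub then
        ws p Y0 (fun ω => U ω = u ∧ W ω = w ∧ X ω = x ∧ R ω = false) else 0 with hSA
    set SQ := ∑ u, if φ u = ub then
        ws p (fun ω => q (Z ω) (X ω)) (fun ω => U ω = u ∧ W ω = w ∧ X ω = x ∧ R ω = true) else 0 with hSQ
    set ST := ∑ u, if φ u = ub then
        ws p (fun ω => q (Z ω) (X ω) * Y0 ω) (fun ω => U ω = u ∧ W ω = w ∧ X ω = x ∧ R ω = true) else 0 with hST
    have e1 : ST ≤ (Γ * M) * SQ := by
      rw [hST, hSQ, Finset.mul_sum]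
      refine Finset.sum_le_sum fun u _ => ?_
      by_cases h : φ u = ub
      · simp only [h, if_true]
        exact (key u h).1
      · simp [h]
    have e4 : (M / Γ) * SQ ≤ ST := by
      rw [hST, hSQ, Finset.mul_sum]
      refine Finset.sum_le_sum fun u _ => ?_
      by_cases h : φ u = ub
      · simp only [h, if_true]
        exact (key u h).2.1
      · simp [h]
    have e3 : SA ≤ (Γ * M) * Sa := by
      rw [hSA, hSa, Finset.mul_sum]
      refine Finset.sum_le_sum fun u _ => ?_
      by_cases h : φ u = ub
      · simp only [h, if_true]
        exact (key u h).2.2.1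
      · simp [h]
    have e2 : (M / Γ) * Sa ≤ SA := by
      rw [hSA, hSa, Finset.mul_sum]
      refine Finset.sum_le_sum fun u _ => ?_
      by_cases h : φ u = ub
      · simp only [h, if_true]
        exact (key u h).2.2.2
      · simp [h]
    have hSaSQ : Sa = SQ := bridge
    have efield : ∀ s : ℝ, (Γ * M) * s = Γ ^ 2 * ((M / Γ) * s) := by
      intro s
      field_simp
    constructor
    · calc ST ≤ (Γ * M) * SQ := e1
        _ = (Γ * M) * Sa := by rw [hSaSQ]
        _ = Γ ^ 2 * ((M / Γ) * Sa) := efield Sa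
        _ ≤ Γ ^ 2 * SA := by
            exact mul_le_mul_of_nonneg_left e2 (le_of_lt hΓ2)
    · calc SA ≤ (Γ * M) * Sa := e3
        _ = (Γ * M) * SQ := by rw [hSaSQ]
        _ = Γ ^ 2 * ((M / Γ) * SQ) := efield SQ
        _ ≤ Γ ^ 2 * ST := mul_le_mul_of_nonneg_left e4 (le_of_lt hΓ2)
  · -- degenerate fiber
    have hub0 : pr p (fun ω => φ (U ω) = ub ∧ W ω = w ∧ X ω = x) = 0 :=
      le_antisymm (not_lt.mp hub) (pr_nonneg p hp _)
    have hz : ∀ (f : Ω → ℝ) (u : 𝒰) (r : Bool), φ u = ub →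
        ws p f (fun ω => U ω = u ∧ W ω = w ∧ X ω = x ∧ R ω = r) = 0 := by
      intro f u r hu
      exact ws_zero_of_pr p hp f hub0 fun ω h => ⟨by rw [h.1]; exact hu, h.2.1, h.2.2.1⟩
    have hT0 : (∑ u, if φ u = ub then
        ws p (fun ω => q (Z ω) (X ω) * Y0 ω) (fun ω => U ω = u ∧ W ω = w ∧ X ω = x ∧ R ω = true)
        else 0) = 0 :=
      Finset.sum_eq_zero fun u _ => by
        by_cases h : φ u = ub
        · rw [if_pos h, hz _ u true h]
        · rw [if_neg h]
    have hA0 : (∑ u, if φ u = ub then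
        ws p Y0 (fun ω => U ω = u ∧ W ω = w ∧ X ω = x ∧ R ω = false) else 0) = 0 :=
      Finset.sum_eq_zero fun u _ => by
        by_cases h : φ u = ub
        · rw [if_pos h, hz Y0 u false h]
        · rw [if_neg h]
    rw [hT0, hA0]
    simp

/-- Sensitivity bound for the treatment-bridge identification formula under coarsening
of the unmeasured confounder (Supplement S3, treatment-bridge bound). -/
theorem treatment_bridge_sensitivity_bound
    {𝒳 𝒰 𝒰b 𝒵 𝒲 : Type*} [Fintype 𝒳] [Fintype 𝒰] [Fintype 𝒰b] [Fintype 𝒵] [Fintype 𝒲]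
    (p : Ω → ℝ) (hp : ∀ ω, 0 ≤ p ω) (hp1 : ∑ ω, p ω = 1)
    (R : Ω → Bool) (X : Ω → 𝒳) (U : Ω → 𝒰) (Z : Ω → 𝒵) (W : Ω → 𝒲)
    (φ : 𝒰 → 𝒰b)
    (Y0 : Ω → ℝ) (hY0 : ∀ ω, 0 ≤ Y0 ω)
    (q : 𝒵 → 𝒳 → ℝ) (hq0 : ∀ z x, 0 ≤ q z x)
    (Γ : ℝ) (hΓ : 1 ≤ Γ)
    -- (i) negative control assumption: (Y₀, W) ⫫ (Z, R) | (U, X)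
    (hNC : ∀ (y : ℝ) (w : 𝒲) (z : 𝒵) (r : Bool) (u : 𝒰) (x : 𝒳),
      0 < pr p (fun ω => U ω = u ∧ X ω = x) →
      cpr p (fun ω => (Y0 ω = y ∧ W ω = w) ∧ (Z ω = z ∧ R ω = r))
          (fun ω => U ω = u ∧ X ω = x)
        = cpr p (fun ω => Y0 ω = y ∧ W ω = w) (fun ω => U ω = u ∧ X ω = x)
          * cpr p (fun ω => Z ω = z ∧ R ω = r) (fun ω => U ω = u ∧ X ω = x))
    -- (ii) support equality
    (hsupp : ∀ (u : 𝒰) (w : 𝒲) (x : 𝒳),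
      0 < pr p (fun ω => U ω = u ∧ W ω = w ∧ X ω = x ∧ R ω = false)
        ↔ 0 < pr p (fun ω => U ω = u ∧ W ω = w ∧ X ω = x ∧ R ω = true))
    -- (iii) bounded density ratio
    (hr : ∀ (u : 𝒰) (w : 𝒲) (x : 𝒳),
      0 < pr p (fun ω => U ω = u ∧ W ω = w ∧ X ω = x ∧ R ω = false) →
      1 / Γ ≤ cpr p (fun ω => U ω = u)
            (fun ω => φ (U ω) = φ u ∧ W ω = w ∧ X ω = x ∧ R ω = false)
          / cpr p (fun ω => U ω = u)
            (fun ω => φ (U ω) = φ u ∧ W ω = w ∧ X ω = x ∧ R ω = true)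
        ∧ cpr p (fun ω => U ω = u)
            (fun ω => φ (U ω) = φ u ∧ W ω = w ∧ X ω = x ∧ R ω = false)
          / cpr p (fun ω => U ω = u)
            (fun ω => φ (U ω) = φ u ∧ W ω = w ∧ X ω = x ∧ R ω = true) ≤ Γ)
    -- (iv) bounded ratio of conditional outcome means
    (hmean : ∀ (u : 𝒰) (w : 𝒲) (x : 𝒳),
      0 < pr p (fun ω => U ω = u ∧ W ω = w ∧ X ω = x ∧ R ω = true) →
      0 < cex p Y0 (fun ω => U ω = u ∧ W ω = w ∧ X ω = x ∧ R ω = true)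
        ∧ 1 / Γ ≤ cex p Y0 (fun ω => φ (U ω) = φ u ∧ W ω = w ∧ X ω = x ∧ R ω = true)
            / cex p Y0 (fun ω => U ω = u ∧ W ω = w ∧ X ω = x ∧ R ω = true)
        ∧ cex p Y0 (fun ω => φ (U ω) = φ u ∧ W ω = w ∧ X ω = x ∧ R ω = true)
            / cex p Y0 (fun ω => U ω = u ∧ W ω = w ∧ X ω = x ∧ R ω = true) ≤ Γ)
    -- (v) coarsened-level treatment bridge equation
    (hBridge : ∀ (ub : 𝒰b) (w : 𝒲) (x : 𝒳),
      0 < pr p (fun ω => φ (U ω) = ub ∧ W ω = w ∧ X ω = x) →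
      cpr p (fun ω => R ω = false) (fun ω => φ (U ω) = ub ∧ W ω = w ∧ X ω = x)
        = cex p (fun ω => (if R ω = true then (1 : ℝ) else 0) * q (Z ω) (X ω))
            (fun ω => φ (U ω) = ub ∧ W ω = w ∧ X ω = x))
    -- (vi)
    (hR0 : 0 < pr p (fun ω => R ω = false)) :
    (1 / Γ ^ 2) * ((1 / pr p (fun ω => R ω = false))
        * ex p (fun ω => (if R ω = true then (1 : ℝ) else 0) * q (Z ω) (X ω) * Y0 ω))
        ≤ cex p Y0 (fun ω => R ω = false)
      ∧ cex p Y0 (fun ω => R ω = false)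
        ≤ Γ ^ 2 * ((1 / pr p (fun ω => R ω = false))
            * ex p (fun ω => (if R ω = true then (1 : ℝ) else 0) * q (Z ω) (X ω) * Y0 ω)) := by
  have hΓ0 : (0:ℝ) < Γ := lt_of_lt_of_le one_pos hΓ
  have hΓ2 : (0:ℝ) < Γ ^ 2 := pow_pos hΓ0 2
  -- convert ex to ws
  have exval : ex p (fun ω => (if R ω = true then (1 : ℝ) else 0) * q (Z ω) (X ω) * Y0 ω)
      = ws p (fun ω => q (Z ω) (X ω) * Y0 ω) (fun ω => R ω = true) := by
    unfold ex ws
    refine Finset.sum_congr rfl fun ω _ => ?_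
    by_cases h : R ω = true <;> simp [h]
  -- decompositions
  have decompGen : ∀ f : Ω → ℝ, ∀ r : Bool, ws p f (fun ω => R ω = r)
      = ∑ u, ∑ w, ∑ x, ws p f (fun ω => U ω = u ∧ W ω = w ∧ X ω = x ∧ R ω = r) := by
    intro f r
    rw [ws_split p f U (fun ω => R ω = r)]
    refine Finset.sum_congr rfl fun u _ => ?_
    rw [ws_split p f W]
    refine Finset.sum_congr rfl fun w _ => ?_
    rw [ws_split p f X]
    refine Finset.sum_congr rfl fun x _ => ?_
    exact ws_congr p f fun ω => by tauto
  have regroup : ∀ f : 𝒰 → ℝ, (∑ u, f u) = ∑ ub, ∑ u, if φ u = ub then f u else 0 := by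
    intro f
    rw [Finset.sum_comm]
    refine Finset.sum_congr rfl fun u _ => ?_
    simp [Finset.sum_ite_eq]
  have flip : ∀ f : 𝒰 → 𝒲 → 𝒳 → ℝ,
      (∑ u, ∑ w, ∑ x, f u w x) = ∑ ub, ∑ w, ∑ x, ∑ u, if φ u = ub then f u w x else 0 := by
    intro f
    rw [regroup (fun u => ∑ w, ∑ x, f u w x)]
    refine Finset.sum_congr rfl fun ub _ => ?_
    rw [Finset.sum_congr rfl fun u (_ : u ∈ univ) =>
      (show (if φ u = ub then ∑ w, ∑ x, f u w x else 0)
          = ∑ w, ∑ x, if φ u = ub then f u w x else 0 from by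
        by_cases h : φ u = ub <;> simp [h])]
    rw [Finset.sum_comm]
    exact Finset.sum_congr rfl fun w _ => Finset.sum_comm
  have total1 : ws p (fun ω => q (Z ω) (X ω) * Y0 ω) (fun ω => R ω = true)
      ≤ Γ ^ 2 * ws p Y0 (fun ω => R ω = false) := by
    rw [decompGen _ true, decompGen Y0 false, flip, flip, Finset.mul_sum]
    refine Finset.sum_le_sum fun ub _ => ?_
    rw [Finset.mul_sum]
    refine Finset.sum_le_sum fun w _ => ?_
    rw [Finset.mul_sum]
    refine Finset.sum_le_sum fun x _ => ?_
    exact (fiber_lemma p hp R X U Z W φ Y0 hY0 q hq0 Γ hΓ hNC hsupp hmean hBridge ub w x).1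
  have total2 : ws p Y0 (fun ω => R ω = false)
      ≤ Γ ^ 2 * ws p (fun ω => q (Z ω) (X ω) * Y0 ω) (fun ω => R ω = true) := by
    rw [decompGen _ true, decompGen Y0 false, flip, flip, Finset.mul_sum]
    refine Finset.sum_le_sum fun ub _ => ?_
    rw [Finset.mul_sum]
    refine Finset.sum_le_sum fun w _ => ?_
    rw [Finset.mul_sum]
    refine Finset.sum_le_sum fun x _ => ?_
    exact (fiber_lemma p hp R X U Z W φ Y0 hY0 q hq0 Γ hΓ hNC hsupp hmean hBridge ub w x).2
  rw [cex_eq, exval]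
  set PT := ws p (fun ω => q (Z ω) (X ω) * Y0 ω) (fun ω => R ω = true) with hPT
  set PA := ws p Y0 (fun ω => R ω = false) with hPA
  set P0 := pr p (fun ω => R ω = false) with hP0
  constructor
  · rw [show (1 / Γ ^ 2) * ((1 / P0) * PT) = PT / (Γ ^ 2 * P0) from by ring]
    rw [div_le_div_iff₀ (mul_pos hΓ2 hR0) hR0]
    calc PT * P0 ≤ (Γ ^ 2 * PA) * P0 :=
          mul_le_mul_of_nonneg_right total1 (le_of_lt hR0)
      _ = PA * (Γ ^ 2 * P0) := by ring
  · rw [show Γ ^ 2 * ((1 / P0) * PT) = (Γ ^ 2 * PT) / P0 from by ring]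
    rw [div_le_div_iff₀ hR0 hR0]
    exact mul_le_mul_of_nonneg_right total2 (le_of_lt hR0)
end
end

section
/- Nonexistence of an informative treatment bridge when the negative control exposure is not a proxy for the confounder (Supplement S4): Suppose Z ⫫ W | (X, R = 1), i.e., for every x with P(X = x, R = 1) > 0 and all values z, w: P(Z = z, W = w | X = x, R = 1) = P(Z = z | X = x, R = 1)·P(W = w | X = x, R = 1). Suppose also that P(W = w, X = x, R = 1) > 0 and P(R = 1 | W = w, X = x) > 0 for every (w, x) with P(W = w, X = x) > 0, and that some q : 𝒵 × 𝒳 → ℝ satisfies P(R = 0 | W = w, X = x)/P(R = 1 | W = w, X = x) = E[ q(Z, X) | W = w, X = x, R = 1 ] for every such (w, x). Then the conditional odds of study membership do not depend on W: for every x and every w, w' with P(W = w, X = x) > 0 and P(W = w', X = x) > 0, P(R = 0 | W = w, X = x)/P(R = 1 | W = w, X = x) = P(R = 0 | W = w', X = x)/P(R = 1 | W = w', X = x). -/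
open Finset

noncomputable section

open scoped Classical

variable {Ω : Type*} [Fintype Ω]

lemma cex_eq_sum {𝒳 𝒵 𝒲 : Type*} [Fintype 𝒳] [Fintype 𝒵] [Fintype 𝒲]
    (p : Ω → ℝ) (hp : ∀ ω, 0 ≤ p ω)
    (R : Ω → Bool) (X : Ω → 𝒳) (Z : Ω → 𝒵) (W : Ω → 𝒲)
    (q : 𝒵 → 𝒳 → ℝ) (x : 𝒳) (w : 𝒲)
    (hD : 0 < pr p (fun ω => W ω = w ∧ X ω = x ∧ R ω = true))
    (hCI : ∀ (z : 𝒵),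
        cpr p (fun ω => Z ω = z ∧ W ω = w) (fun ω => X ω = x ∧ R ω = true)
          = cpr p (fun ω => Z ω = z) (fun ω => X ω = x ∧ R ω = true)
            * cpr p (fun ω => W ω = w) (fun ω => X ω = x ∧ R ω = true)) :
    cex p (fun ω => q (Z ω) (X ω)) (fun ω => W ω = w ∧ X ω = x ∧ R ω = true)
      = ∑ z, q z x * cpr p (fun ω => Z ω = z) (fun ω => X ω = x ∧ R ω = true) := by
  have hXR : 0 < pr p (fun ω => X ω = x ∧ R ω = true) :=
    lt_of_lt_of_le hD (pr_mono p hp (fun ω h => ⟨h.2.1, h.2.2⟩))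
  have hE0 : pr p (fun ω => X ω = x ∧ R ω = true) ≠ 0 := ne_of_gt hXR
  have hD0 : pr p (fun ω => W ω = w ∧ X ω = x ∧ R ω = true) ≠ 0 := ne_of_gt hD
  -- numerator expansion
  have hnum : (∑ ω, if (W ω = w ∧ X ω = x ∧ R ω = true) then p ω * q (Z ω) (X ω) else 0)
      = ∑ z, q z x * pr p (fun ω => Z ω = z ∧ W ω = w ∧ X ω = x ∧ R ω = true) := by
    have step : ∀ ω, (if (W ω = w ∧ X ω = x ∧ R ω = true) then p ω * q (Z ω) (X ω) else 0)
        = ∑ z, q z x * (if (Z ω = z ∧ W ω = w ∧ X ω = x ∧ R ω = true) then p ω else 0) := by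
      intro ω
      rw [Finset.sum_eq_single (Z ω)]
      · by_cases hC : (W ω = w ∧ X ω = x ∧ R ω = true)
        · simp [hC, hC.2.1, mul_comm]
        · simp [hC]
      · intro z _ hz
        simp [Ne.symm hz]
      · simp
    rw [Finset.sum_congr rfl (fun ω _ => step ω), Finset.sum_comm]
    refine Finset.sum_congr rfl (fun z _ => ?_)
    rw [← Finset.mul_sum]
    congr 1
    refine Finset.sum_congr rfl fun ω _ => ?_
    by_cases h : Z ω = z ∧ W ω = w ∧ X ω = x ∧ R ω = true <;> simp [pr, h]
  -- per-z ratio identity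
  have hratio : ∀ z : 𝒵,
      pr p (fun ω => Z ω = z ∧ W ω = w ∧ X ω = x ∧ R ω = true)
          / pr p (fun ω => W ω = w ∧ X ω = x ∧ R ω = true)
        = cpr p (fun ω => Z ω = z) (fun ω => X ω = x ∧ R ω = true) := by
    intro z
    have h1 : pr p (fun ω => Z ω = z ∧ W ω = w ∧ X ω = x ∧ R ω = true)
        = pr p (fun ω => (Z ω = z ∧ W ω = w) ∧ (X ω = x ∧ R ω = true)) :=
      pr_congr p (fun ω => by tauto)
    have h2 : pr p (fun ω => W ω = w ∧ X ω = x ∧ R ω = true)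
        = pr p (fun ω => (W ω = w) ∧ (X ω = x ∧ R ω = true)) :=
      pr_congr p (fun ω => by tauto)
    have hci := hCI z
    simp only [cpr] at hci ⊢
    rw [h1]
    rw [div_eq_div_iff hD0 hE0]
    field_simp at hci
    exact mul_right_cancel₀ hE0 (by linear_combination (pr p (fun ω => X ω = x ∧ R ω = true)) * hci)
  simp only [cex]
  rw [hnum, Finset.sum_div]
  exact Finset.sum_congr rfl (fun z _ => by rw [mul_div_assoc, hratio z])

/-- Nonexistence of an informative treatment bridge when the negative control exposure
is not a proxy for the confounder (Supplement S4). -/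
theorem no_informative_treatment_bridge
    {𝒳 𝒵 𝒲 : Type*} [Fintype 𝒳] [Fintype 𝒵] [Fintype 𝒲]
    (p : Ω → ℝ) (hp : ∀ ω, 0 ≤ p ω) (hp1 : ∑ ω, p ω = 1)
    (R : Ω → Bool) (X : Ω → 𝒳) (Z : Ω → 𝒵) (W : Ω → 𝒲)
    (q : 𝒵 → 𝒳 → ℝ)
    -- Z ⫫ W | (X, R = 1)
    (hCI : ∀ x : 𝒳, 0 < pr p (fun ω => X ω = x ∧ R ω = true) →
      ∀ (z : 𝒵) (w : 𝒲),
        cpr p (fun ω => Z ω = z ∧ W ω = w) (fun ω => X ω = x ∧ R ω = true)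
          = cpr p (fun ω => Z ω = z) (fun ω => X ω = x ∧ R ω = true)
            * cpr p (fun ω => W ω = w) (fun ω => X ω = x ∧ R ω = true))
    -- positivity
    (hWpos : ∀ (w : 𝒲) (x : 𝒳), 0 < pr p (fun ω => W ω = w ∧ X ω = x) →
      0 < pr p (fun ω => W ω = w ∧ X ω = x ∧ R ω = true)
        ∧ 0 < cpr p (fun ω => R ω = true) (fun ω => W ω = w ∧ X ω = x))
    -- observed treatment bridge equation
    (hq : ∀ (w : 𝒲) (x : 𝒳), 0 < pr p (fun ω => W ω = w ∧ X ω = x) →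
      cpr p (fun ω => R ω = false) (fun ω => W ω = w ∧ X ω = x)
          / cpr p (fun ω => R ω = true) (fun ω => W ω = w ∧ X ω = x)
        = cex p (fun ω => q (Z ω) (X ω)) (fun ω => W ω = w ∧ X ω = x ∧ R ω = true)) :
    ∀ (x : 𝒳) (w w' : 𝒲),
      0 < pr p (fun ω => W ω = w ∧ X ω = x) →
      0 < pr p (fun ω => W ω = w' ∧ X ω = x) →
      cpr p (fun ω => R ω = false) (fun ω => W ω = w ∧ X ω = x)
          / cpr p (fun ω => R ω = true) (fun ω => W ω = w ∧ X ω = x)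
        = cpr p (fun ω => R ω = false) (fun ω => W ω = w' ∧ X ω = x)
          / cpr p (fun ω => R ω = true) (fun ω => W ω = w' ∧ X ω = x) := by
  intro x w w' hw hw'
  have hDw := (hWpos w x hw).1
  have hDw' := (hWpos w' x hw').1
  have hXR : 0 < pr p (fun ω => X ω = x ∧ R ω = true) :=
    lt_of_lt_of_le hDw (pr_mono p hp (fun ω h => ⟨h.2.1, h.2.2⟩))
  rw [hq w x hw, hq w' x hw',
    cex_eq_sum p hp R X Z W q x w hDw (fun z => hCI x hXR z w),
    cex_eq_sum p hp R X Z W q x w' hDw' (fun z => hCI x hXR z w')]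
end
end
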